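/- Let H : ℝ^N → ℝ be δ-good and satisfy the C-derivative bounds, for some δ, C > 0. Then for every x ∈ [−1,1]^N with |x|₂² ≤ 1 − δ there exists a nonzero vector v ∈ ℝ^N with ⟨v,x⟩ = 0 such that: (1) x + v ∈ [−1,1]^N; (2) v_i = 0 whenever |x_i| = 1; (3) H(x+v) − H(x) ≥ (ζ(|x|₂²)·√(1−|x|₂²) − δ)·|v|₂²; (4) |v|₂ ≤ δ/(10C); and (5) either |v|₂ = δ/(10C) or the number of indices i with |(x+v)_i| = 1 is strictly larger than the number of indices i with |x_i| = 1. -/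

import Mathlib

/-- Second derivative `ξ''(t) = ∑_{p=1}^P γ_p² p(p-1) t^{p-2}` of the mixture function. -/
noncomputable def xiSecond (P : ℕ) (γ : ℕ → ℝ) (t : ℝ) : ℝ :=
  ∑ p ∈ Finset.Icc 1 P, (γ p) ^ 2 * ((p : ℝ) * ((p : ℝ) - 1)) * t ^ (p - 2)

/-- `ζ(t) = √(ξ''(t))`. -/
noncomputable def zeta (P : ℕ) (γ : ℕ → ℝ) (t : ℝ) : ℝ :=
  Real.sqrt (xiSecond P γ t)

/-- `H` is `δ`-good: for every `ε ≥ δ`, every `x ∈ [-1,1]^N` and every `S ⊆ [N]` with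
`|S| ≥ εN` there is a nonzero `v` supported on `S`, orthogonal to `x`, along which the
(normalized) Hessian quadratic form is at least `(2ζ(|x|₂²)√ε − δ)`. -/
def IsGood (N P : ℕ) (γ : ℕ → ℝ) (δ : ℝ) (H : (Fin N → ℝ) → ℝ) : Prop :=
  ∀ ε : ℝ, δ ≤ ε → ∀ x : Fin N → ℝ, (∀ i, |x i| ≤ 1) →
    ∀ S : Finset (Fin N), ε * N ≤ (S.card : ℝ) →
      ∃ v : Fin N → ℝ, v ≠ 0 ∧ (∀ i, i ∉ S → v i = 0) ∧ (∑ i, v i * x i) = 0 ∧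
        (2 * zeta P γ ((∑ i, (x i) ^ 2) / N) * Real.sqrt ε - δ) * (∑ i, (v i) ^ 2) ≤
          (N : ℝ) * iteratedFDeriv ℝ 2 H x ![v, v]

/-- `H` satisfies the `C`-derivative bounds: it is three times continuously differentiable and
its directional derivatives of orders 1, 2, 3 along unit directions (in the normalized norm)
are bounded by `C` on the unit ball. -/
def DerivBounds (N : ℕ) (C : ℝ) (H : (Fin N → ℝ) → ℝ) : Prop :=
  ContDiff ℝ 3 H ∧
  ∀ σ : Fin N → ℝ, (∑ i, (σ i) ^ 2) / N ≤ 1 →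
    ∀ v : Fin N → ℝ, (∑ i, (v i) ^ 2) = (N : ℝ) →
      |fderiv ℝ H σ v| ≤ C ∧ |iteratedFDeriv ℝ 2 H σ ![v, v]| ≤ C ∧
        |iteratedFDeriv ℝ 3 H σ ![v, v, v]| ≤ C

/-!
Let the free coordinates be those with `|x i| < 1`; there are at least `(1 - |x|₂²) N` of them, so
goodness with `ε = 1 - |x|₂²` gives a direction `w ⊥ x`, supported on them and normalised to
`|w|₂ = 1`, whose Hessian form is at least `2ζ√ε - δ`; its sign is chosen so that `∇H(x) · w ≥ 0`.
Walk along `x + τ w` until `τ = δ / (10C)` or a free coordinate reaches `±1`. On that segment the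
third directional derivative is at most `C`, so Taylor's formula gives
`H(x + τ w) - H(x) ≥ (ζ√ε - δ/2) τ² - C τ³ / 6 ≥ (ζ√ε - δ) τ²`, since `C τ ≤ δ / 10`.
-/

open Set
open scoped Finset

theorem nonneg_of_hasDerivAt_of_nonneg {φ φ' : ℝ → ℝ} {t : ℝ} (hφ : ∀ τ, HasDerivAt φ (φ' τ) τ)
    (h0 : φ 0 = 0) (hφ' : ∀ τ ∈ Icc 0 t, 0 ≤ φ' τ) : ∀ τ ∈ Icc 0 t, 0 ≤ φ τ := by
  have hmono : MonotoneOn φ (Icc 0 t) :=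
    monotoneOn_of_hasDerivWithinAt_nonneg (convex_Icc 0 t)
      (fun τ _ => (hφ τ).continuousAt.continuousWithinAt)
      (fun τ _ => (hφ τ).hasDerivWithinAt)
      (fun τ hτ => hφ' τ (interior_subset hτ))
  intro τ hτ
  simpa [h0] using hmono ⟨le_rfl, hτ.1.trans hτ.2⟩ hτ hτ.1

/-- Integrating `f₃ ≥ -C` three times. -/
theorem taylor_lower_bound_of_abs_le {f f₁ f₂ f₃ : ℝ → ℝ} {C t : ℝ}
    (hf : ∀ τ, HasDerivAt f (f₁ τ) τ) (hf₁ : ∀ τ, HasDerivAt f₁ (f₂ τ) τ)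
    (hf₂ : ∀ τ, HasDerivAt f₂ (f₃ τ) τ) (hf₃ : ∀ τ ∈ Icc 0 t, |f₃ τ| ≤ C) (ht : 0 ≤ t) :
    f₁ 0 * t + f₂ 0 / 2 * t ^ 2 - C / 6 * t ^ 3 ≤ f t - f 0 := by
  have h₂ : ∀ τ ∈ Icc 0 t, 0 ≤ f₂ τ - f₂ 0 + C * τ := by
    refine nonneg_of_hasDerivAt_of_nonneg (φ' := fun τ => f₃ τ + C) (fun τ => ?_) (by simp)
      (fun τ hτ => by linarith [neg_abs_le (f₃ τ), hf₃ τ hτ])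
    simpa using ((hf₂ τ).sub_const (f₂ 0)).fun_add ((hasDerivAt_id' τ).const_mul C)
  have h₁ : ∀ τ ∈ Icc 0 t, 0 ≤ f₁ τ - f₁ 0 - f₂ 0 * τ + C / 2 * τ ^ 2 := by
    refine nonneg_of_hasDerivAt_of_nonneg (fun τ => ?_) (by simp) h₂
    refine ((((hf₁ τ).sub_const (f₁ 0)).fun_sub ((hasDerivAt_id' τ).const_mul (f₂ 0))).fun_add
      ((hasDerivAt_pow 2 τ).const_mul (C / 2))).congr_deriv ?_
    push_cast; ring
  have h₀ : ∀ τ ∈ Icc 0 t, 0 ≤ f τ - f 0 - f₁ 0 * τ - f₂ 0 / 2 * τ ^ 2 + C / 6 * τ ^ 3 := by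
    refine nonneg_of_hasDerivAt_of_nonneg (fun τ => ?_) (by simp) h₁
    refine (((((hf τ).sub_const (f 0)).fun_sub ((hasDerivAt_id' τ).const_mul (f₁ 0))).fun_sub
      ((hasDerivAt_pow 2 τ).const_mul (f₂ 0 / 2))).fun_add
      ((hasDerivAt_pow 3 τ).const_mul (C / 6))).congr_deriv ?_
    push_cast; ring
  linarith [h₀ t ⟨ht, le_rfl⟩]

section Line

variable {E F : Type*} [NormedAddCommGroup E] [NormedSpace ℝ E] [NormedAddCommGroup F]
  [NormedSpace ℝ F]

theorem hasDerivAt_iteratedFDeriv_line {H : E → F} {n : ℕ}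
    (hd : Differentiable ℝ (iteratedFDeriv ℝ n H)) (x w : E) (τ : ℝ) :
    HasDerivAt (fun t : ℝ => iteratedFDeriv ℝ n H (x + t • w) (fun _ => w))
      (iteratedFDeriv ℝ (n + 1) H (x + τ • w) (fun _ => w)) τ := by
  have hline : HasDerivAt (fun t : ℝ => x + t • w) w τ := by
    simpa using ((hasDerivAt_id τ).smul_const w).const_add x
  rw [iteratedFDeriv_succ_apply_left]
  exact (((hd _).hasFDerivAt).continuousMultilinear_apply_const _).comp_hasDerivAt τ hline

theorem ContDiff.taylor_lower_bound_line {H : E → ℝ} {C t : ℝ} (hH : ContDiff ℝ 3 H) (x w : E)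
    (hC : ∀ τ ∈ Icc 0 t, |iteratedFDeriv ℝ 3 H (x + τ • w) ![w, w, w]| ≤ C) (ht : 0 ≤ t) :
    fderiv ℝ H x w * t + iteratedFDeriv ℝ 2 H x ![w, w] / 2 * t ^ 2 - C / 6 * t ^ 3 ≤
      H (x + t • w) - H x := by
  have hd : ∀ n : ℕ, n < 3 → Differentiable ℝ (iteratedFDeriv ℝ n H) := fun n hn =>
    hH.differentiable_iteratedFDeriv (by exact_mod_cast hn)
  simp only [Matrix.vec_single_eq_const, Matrix.vecCons_const] at hC ⊢
  simpa [iteratedFDeriv_one_apply] using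
    taylor_lower_bound_of_abs_le (hasDerivAt_iteratedFDeriv_line (hd 0 (by norm_num)) x w)
      (hasDerivAt_iteratedFDeriv_line (hd 1 (by norm_num)) x w)
      (hasDerivAt_iteratedFDeriv_line (hd 2 (by norm_num)) x w) hC ht

end Line

section Cube

variable {ι : Type*} [Fintype ι]

theorem sum_sq_smul (t : ℝ) (w : ι → ℝ) :
    ∑ i, (t • w) i ^ 2 = t ^ 2 * ∑ i, w i ^ 2 := by
  simp only [Pi.smul_apply, smul_eq_mul, mul_pow, Finset.mul_sum]

theorem sum_smul_mul (t : ℝ) (w x : ι → ℝ) : ∑ i, (t • w) i * x i = t * ∑ i, w i * x i := by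
  simp only [Pi.smul_apply, smul_eq_mul, mul_assoc, Finset.mul_sum]

theorem sub_sum_sq_le_card_abs_lt_one {x : ι → ℝ} (hx : ∀ i, |x i| ≤ 1) :
    (Fintype.card ι : ℝ) - ∑ i, x i ^ 2 ≤ #{i | |x i| < 1} := by
  calc (Fintype.card ι : ℝ) - ∑ i, x i ^ 2 = ∑ i, (1 - x i ^ 2) := by
        simp [Finset.sum_sub_distrib]
    _ ≤ ∑ i, if |x i| < 1 then (1 : ℝ) else 0 := by
        refine Finset.sum_le_sum fun i _ => ?_
        split_ifs with h
        · nlinarith [sq_nonneg (x i)]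
        · have : |x i| = 1 := le_antisymm (hx i) (not_lt.1 h)
          nlinarith [sq_abs (x i)]
    _ = #{i | |x i| < 1} := by simp

theorem exists_exit_time_of_abs_lt_one {a w : ℝ} (ha : |a| < 1) (hw : w ≠ 0) :
    ∃ r > 0, |a + r * w| = 1 ∧ ∀ τ ∈ Icc 0 r, |a + τ * w| ≤ 1 := by
  wlog hw_pos : 0 < w generalizing a w
  · obtain ⟨r, hr, hexit, hbox⟩ := this (a := -a) (w := -w) (by rwa [abs_neg])
      (neg_ne_zero.2 hw) (by linarith [lt_of_le_of_ne (not_lt.1 hw_pos) hw])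
    refine ⟨r, hr, ?_, fun τ hτ => ?_⟩
    · rw [← abs_neg, ← hexit]; ring_nf
    · rw [← abs_neg]; convert hbox τ hτ using 2; ring
  obtain ⟨ha₁, ha₂⟩ := abs_lt.1 ha
  refine ⟨(1 - a) / w, div_pos (by linarith) hw_pos, by simp [hw], fun τ hτ => abs_le.2 ⟨?_, ?_⟩⟩
  · nlinarith [hτ.1]
  · have := mul_le_mul_of_nonneg_right hτ.2 hw_pos.le
    rw [div_mul_cancel₀ _ hw] at this
    linarith

theorem exists_exit_time {x w : ι → ℝ} (hx : ∀ i, |x i| ≤ 1) (hw : w ≠ 0)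
    (hfree : ∀ i, |x i| = 1 → w i = 0) :
    ∃ T > 0, (∀ τ ∈ Icc 0 T, ∀ i, |x i + τ * w i| ≤ 1) ∧ ∃ i, |x i| < 1 ∧ |x i + T * w i| = 1 := by
  have hfree' : ∀ i, w i ≠ 0 → |x i| < 1 := fun i hi => lt_of_le_of_ne (hx i) (mt (hfree i) hi)
  choose! r hr hexit hbox using
    fun i (hi : w i ≠ 0) => exists_exit_time_of_abs_lt_one (hfree' i hi) hi
  have hs : ({i | w i ≠ 0} : Finset ι).Nonempty := by
    obtain ⟨i, hi⟩ := Function.ne_iff.1 hw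
    exact ⟨i, by simpa using hi⟩
  obtain ⟨i₀, hi₀, hT⟩ := Finset.exists_mem_eq_inf' hs r
  rw [Finset.mem_filter] at hi₀
  refine ⟨r i₀, hr i₀ hi₀.2, fun τ hτ i => ?_, i₀, hfree' i₀ hi₀.2, hexit i₀ hi₀.2⟩
  by_cases hi : w i = 0
  · simpa [hi] using hx i
  · exact hbox i hi τ ⟨hτ.1, hτ.2.trans (hT ▸ Finset.inf'_le r (by simpa using hi))⟩

theorem ncard_abs_eq_one_lt_of_hit {x v : ι → ℝ} (hv : ∀ i, |x i| = 1 → v i = 0) {i₀ : ι}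
    (hi₀ : |x i₀| < 1) (hexit : |x i₀ + v i₀| = 1) :
    {i | |x i| = 1}.ncard < {i | |x i + v i| = 1}.ncard := by
  have hsub : {i | |x i| = 1} ⊆ {i | |x i + v i| = 1} := fun i hi => by
    simpa [hv i hi] using hi
  exact Set.ncard_lt_ncard ((Set.ssubset_iff_of_subset hsub).2 ⟨i₀, hexit, hi₀.ne⟩)
    (Set.toFinite _)

end Cube

theorem sum_sq_div_le_one_of_abs_le {N : ℕ} {y : Fin N → ℝ} (hy : ∀ i, |y i| ≤ 1) :
    (∑ i, y i ^ 2) / N ≤ 1 := by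
  refine div_le_one_of_le₀ ?_ (Nat.cast_nonneg N)
  calc ∑ i, y i ^ 2 ≤ ∑ _i : Fin N, (1 : ℝ) :=
        Finset.sum_le_sum fun i _ => (sq_le_one_iff_abs_le_one _).2 (hy i)
    _ = N := by simp

theorem natCast_ne_zero_of_ne_zero {N : ℕ} {v : Fin N → ℝ} (hv : v ≠ 0) : (N : ℝ) ≠ 0 :=
  Nat.cast_ne_zero.2 fun hN => hv (by subst hN; exact Subsingleton.elim _ _)

theorem sub_div_mul_le_card_abs_lt_one {N : ℕ} {x : Fin N → ℝ} (hx : ∀ i, |x i| ≤ 1) :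
    (1 - (∑ i, x i ^ 2) / N) * N ≤ #{i | |x i| < 1} := by
  have := sub_sum_sq_le_card_abs_lt_one hx
  rcases eq_or_ne (N : ℝ) 0 with hN | hN
  · simp [hN]
  · rw [Fintype.card_fin] at this
    simpa [sub_mul, div_mul_cancel₀ _ hN] using this

theorem IsGood.exists_ascent_direction {N P : ℕ} {γ : ℕ → ℝ} {δ : ℝ} {H : (Fin N → ℝ) → ℝ}
    (hgood : IsGood N P γ δ H) {x : Fin N → ℝ} (hx : ∀ i, |x i| ≤ 1)
    (hxn : (∑ i, x i ^ 2) / N ≤ 1 - δ) :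
    ∃ w : Fin N → ℝ, w ≠ 0 ∧ ∑ i, w i ^ 2 = N ∧ ∑ i, w i * x i = 0 ∧
      (∀ i, |x i| = 1 → w i = 0) ∧ 0 ≤ fderiv ℝ H x w ∧
      2 * zeta P γ ((∑ i, x i ^ 2) / N) * √(1 - (∑ i, x i ^ 2) / N) - δ ≤
        iteratedFDeriv ℝ 2 H x ![w, w] := by
  obtain ⟨v, hv0, hsupp, horth, hhess⟩ :=
    hgood _ (by linarith) x hx _ (sub_div_mul_le_card_abs_lt_one hx)
  have hfree : ∀ i, |x i| = 1 → v i = 0 := fun i hi => hsupp i (by simp [hi])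
  set M := ∑ i, v i ^ 2
  have hM : 0 < M := by
    obtain ⟨j, hj⟩ := Function.ne_iff.1 hv0
    have hj : v j ≠ 0 := by simpa using hj
    exact Finset.sum_pos' (fun i _ => sq_nonneg _) ⟨j, Finset.mem_univ j, by positivity⟩
  have hN := natCast_ne_zero_of_ne_zero hv0
  obtain ⟨s, hs, hs_grad⟩ : ∃ s : ℝ, s ^ 2 = N / M ∧ 0 ≤ s * fderiv ℝ H x v := by
    have hsq : √(N / M) ^ 2 = N / M := Real.sq_sqrt (by positivity)
    rcases le_total 0 (fderiv ℝ H x v) with h | h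
    · exact ⟨√(N / M), hsq, mul_nonneg (Real.sqrt_nonneg _) h⟩
    · exact ⟨-√(N / M), by rwa [neg_sq],
        mul_nonneg_of_nonpos_of_nonpos (neg_nonpos.2 (Real.sqrt_nonneg _)) h⟩
  have hs0 : s ≠ 0 := by
    rintro rfl
    exact div_ne_zero hN hM.ne' (by rw [← hs]; norm_num)
  refine ⟨s • v, smul_ne_zero hs0 hv0, ?_, ?_, fun i hi => by simp [hfree i hi], by simpa, ?_⟩
  · rw [sum_sq_smul, hs, div_mul_cancel₀ _ hM.ne']
  · rw [sum_smul_mul, horth, mul_zero]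
  · have hscale := (iteratedFDeriv ℝ 2 H x).map_smul_univ (fun _ => s) ![v, v]
    simp only [Matrix.vec_single_eq_const, Matrix.vecCons_const] at hscale hhess ⊢
    rw [hscale, Finset.prod_const, Finset.card_univ, Fintype.card_fin, hs, smul_eq_mul,
      div_mul_eq_mul_div, le_div_iff₀ hM]
    linarith

theorem increment_step_general
    (N P : ℕ) (γ : ℕ → ℝ)
    (δ C : ℝ) (hδ : 0 < δ) (hC : 0 < C)
    (H : (Fin N → ℝ) → ℝ) (hgood : IsGood N P γ δ H) (hbd : DerivBounds N C H)
    (x : Fin N → ℝ) (hx : ∀ i, |x i| ≤ 1) (hxn : (∑ i, (x i) ^ 2) / N ≤ 1 - δ) :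
    ∃ v : Fin N → ℝ, v ≠ 0 ∧ (∑ i, v i * x i) = 0 ∧
      (∀ i, |x i + v i| ≤ 1) ∧
      (∀ i, |x i| = 1 → v i = 0) ∧
      (zeta P γ ((∑ i, (x i) ^ 2) / N) * Real.sqrt (1 - (∑ i, (x i) ^ 2) / N) - δ) *
          ((∑ i, (v i) ^ 2) / N) ≤ H (x + v) - H x ∧
      Real.sqrt ((∑ i, (v i) ^ 2) / N) ≤ δ / (10 * C) ∧
      (Real.sqrt ((∑ i, (v i) ^ 2) / N) = δ / (10 * C) ∨
        {i : Fin N | |x i| = 1}.ncard < {i : Fin N | |x i + v i| = 1}.ncard) := by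
  obtain ⟨w, hw0, hw_norm, hw_orth, hw_free, hw_grad, hw_hess⟩ :=
    hgood.exists_ascent_direction hx hxn
  obtain ⟨T, hT, hT_box, i₀, hi₀, hi₀_exit⟩ := exists_exit_time hx hw0 hw_free
  set t := min (δ / (10 * C)) T
  have ht : 0 < t := lt_min (by positivity) hT
  have hbox : ∀ τ ∈ Icc 0 t, ∀ i, |x i + τ * w i| ≤ 1 := fun τ hτ =>
    hT_box τ ⟨hτ.1, hτ.2.trans (min_le_right _ _)⟩
  have hnorm_sq : (∑ i, (t • w) i ^ 2) / N = t ^ 2 := by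
    rw [sum_sq_smul, hw_norm, mul_div_cancel_right₀ _ (natCast_ne_zero_of_ne_zero hw0)]
  have hnorm : √((∑ i, (t • w) i ^ 2) / N) = t := by rw [hnorm_sq, Real.sqrt_sq ht.le]
  have hCt : C * t ≤ δ / 10 := by
    calc C * t ≤ C * (δ / (10 * C)) := mul_le_mul_of_nonneg_left (min_le_left _ _) hC.le
      _ = δ / 10 := by field_simp
  have htaylor := hbd.1.taylor_lower_bound_line x w (fun τ hτ =>
    (hbd.2 _ (sum_sq_div_le_one_of_abs_le (hbox τ hτ)) w hw_norm).2.2) ht.le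
  refine ⟨t • w, smul_ne_zero ht.ne' hw0, ?_, hbox t ⟨ht.le, le_rfl⟩,
    fun i hi => by simp [hw_free i hi], ?_, hnorm.trans_le (min_le_left _ _), ?_⟩
  · rw [sum_smul_mul, hw_orth, mul_zero]
  · rw [hnorm_sq]
    nlinarith [mul_nonneg hw_grad ht.le, mul_le_mul_of_nonneg_right hw_hess (sq_nonneg t),
      mul_le_mul_of_nonneg_right hCt (sq_nonneg t)]
  · rcases le_total (δ / (10 * C)) T with h | h
    · exact Or.inl (hnorm.trans (min_eq_left h))
    · refine Or.inr (ncard_abs_eq_one_lt_of_hit (fun i hi => by simp [hw_free i hi]) hi₀ ?_)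
      simpa [t, min_eq_right h] using hi₀_exit

/-- Lemma 4 of the paper: from any point of `[-1,1]^N` far from a corner, a
`δ`-good Hamiltonian with `C`-derivative bounds admits an orthogonal improvement step `v`. -/
theorem increment_step
    (N P : ℕ) (γ : ℕ → ℝ) (hγ : ∀ p, 0 ≤ γ p)
    (hmix : ∃ p, 2 ≤ p ∧ p ≤ P ∧ 0 < γ p)
    (δ C : ℝ) (hδ : 0 < δ) (hC : 0 < C)
    (H : (Fin N → ℝ) → ℝ) (hgood : IsGood N P γ δ H) (hbd : DerivBounds N C H)
    (x : Fin N → ℝ) (hx : ∀ i, |x i| ≤ 1) (hxn : (∑ i, (x i) ^ 2) / N ≤ 1 - δ) :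
    ∃ v : Fin N → ℝ, v ≠ 0 ∧ (∑ i, v i * x i) = 0 ∧
      (∀ i, |x i + v i| ≤ 1) ∧
      (∀ i, |x i| = 1 → v i = 0) ∧
      (zeta P γ ((∑ i, (x i) ^ 2) / N) * Real.sqrt (1 - (∑ i, (x i) ^ 2) / N) - δ) *
          ((∑ i, (v i) ^ 2) / N) ≤ H (x + v) - H x ∧
      Real.sqrt ((∑ i, (v i) ^ 2) / N) ≤ δ / (10 * C) ∧
      (Real.sqrt ((∑ i, (v i) ^ 2) / N) = δ / (10 * C) ∨
        {i : Fin N | |x i| = 1}.ncard < {i : Fin N | |x i + v i| = 1}.ncard) :=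
  increment_step_general N P γ δ C hδ hC H hgood hbd x hx hxn
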